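/- For the star case of the splice lemma: if symbol x appears exactly once in regex g₀ and the splice property holds for g₀ (i.e., whenever u·x·v' ∈ ⟦g₀⟧ and u'·x·v ∈ ⟦g₀⟧ then u·x·v ∈ ⟦g₀⟧), then the splice property holds for g₀* restricted to strings containing x: whenever u·x·v' ∈ ⟦g₀*⟧ and u'·x·v ∈ ⟦g₀*⟧ then u·x·v ∈ ⟦g₀*⟧. -/
import Mathlib

/-- Number of occurrences of the symbol `x` as a leaf of the regex `g`. -/
def countSym {α : Type*} [DecidableEq α] : RegularExpression α → α → ℕ
  | .zero, _ => 0
  | .epsilon, _ => 0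
  | .char a, x => if a = x then 1 else 0
  | .plus l r, x => countSym l x + countSym r x
  | .comp l r, x => countSym l x + countSym r x
  | .star g, x => countSym g x

/-- If a flattened list of lists equals `u ++ [x] ++ v`, then the occurrence of `x`
lies inside one of the factors. -/
lemma flatten_split {α : Type*} :
    ∀ (L : List (List α)) (u v : List α) (x : α), L.flatten = u ++ [x] ++ v →
      ∃ L₁ a b L₂, L = L₁ ++ (a ++ [x] ++ b) :: L₂ ∧
        u = L₁.flatten ++ a ∧ v = b ++ L₂.flatten := by
  intro L
  induction L with
  | nil =>
      intro u v x h
      simp at h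
  | cons w rest ih =>
      intro u v x h
      simp only [List.flatten_cons, List.append_assoc] at h
      rcases List.append_eq_append_iff.mp h with ⟨a', ha1, ha2⟩ | ⟨c', hc1, hc2⟩
      · -- u = w ++ a', rest.flatten = a' ++ ([x] ++ v)
        obtain ⟨L₁, a, b, L₂, hL, hu, hv⟩ := ih a' v x (by rw [ha2]; simp)
        exact ⟨w :: L₁, a, b, L₂, by rw [hL]; rfl, by simp [ha1, hu], hv⟩
      · -- w = u ++ c', [x] ++ v = c' ++ rest.flatten
        cases c' with
        | nil =>
            simp at hc2
            obtain ⟨L₁, a, b, L₂, hL, hu, hv⟩ := ih [] v x (by simp [← hc2])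
            refine ⟨w :: L₁, a, b, L₂, by rw [hL]; rfl, ?_, hv⟩
            simp [hc1, hu]
        | cons y c =>
            simp only [List.cons_append, List.singleton_append, List.cons.injEq] at hc2
            obtain ⟨rfl, hv⟩ := hc2
            exact ⟨[], u, c, rest, by simp [hc1], by simp, hv⟩

/-- **Star case of the splice lemma.** If `x` appears exactly once in `g₀` and the
splice property holds for `g₀`, then the splice property holds for `g₀*`
(restricted to strings containing `x`). -/
theorem splice_star {α : Type*} [DecidableEq α] (g₀ : RegularExpression α) (x : α)
    (hunique : countSym g₀ x = 1)
    (hsplice : ∀ u v' u' v : List α,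
      u ++ [x] ++ v' ∈ g₀.matches' → u' ++ [x] ++ v ∈ g₀.matches' →
        u ++ [x] ++ v ∈ g₀.matches')
    (u v' u' v : List α)
    (h₁ : u ++ [x] ++ v' ∈ g₀.star.matches')
    (h₂ : u' ++ [x] ++ v ∈ g₀.star.matches') :
    u ++ [x] ++ v ∈ g₀.star.matches' := by
  rw [RegularExpression.matches'_star] at h₁ h₂ ⊢
  obtain ⟨L, hLe, hLm⟩ := Language.mem_kstar.mp h₁
  obtain ⟨M, hMe, hMm⟩ := Language.mem_kstar.mp h₂
  obtain ⟨L₁, a, b, L₂, hL, hu, -⟩ := flatten_split L u v' x hLe.symm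
  obtain ⟨M₁, a', b', M₂, hM, -, hv⟩ := flatten_split M u' v x hMe.symm
  have hab : a ++ [x] ++ b ∈ g₀.matches' := hLm _ (by rw [hL]; simp)
  have hab' : a' ++ [x] ++ b' ∈ g₀.matches' := hMm _ (by rw [hM]; simp)
  have hkey : a ++ [x] ++ b' ∈ g₀.matches' := hsplice a b a' b' hab hab'
  have : (L₁ ++ (a ++ [x] ++ b') :: M₂).flatten ∈ KStar.kstar g₀.matches' := by
    apply Language.join_mem_kstar
    intro y hy
    rcases List.mem_append.mp hy with hy | hy
    · exact hLm _ (by rw [hL]; simp [hy])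
    · rcases List.mem_cons.mp hy with rfl | hy
      · exact hkey
      · exact hMm _ (by rw [hM]; simp [hy])
  simpa [hu, hv, List.flatten_append] using this
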